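/- Let G be an indiscriminate linear influence game: there are nonzero reals δ_1, …, δ_n, all of the same sign ρ ∈ {−1,1} (i.e., ρ·δ_i > 0 for all i), such that w_{ij} = δ_i for every j ≠ i. Define Φ(x) = ρ·[(Σ_{i=1}^n δ_i x_i)² − 2·Σ_{i=1}^n b_i δ_i x_i]. Then for every player j and every x_{−j} ∈ {−1,1}^{n−1}, Φ(1, x_{−j}) − Φ(−1, x_{−j}) = 4·ρ·δ_j·(Σ_{i≠j} δ_i x_i − b_j) = 2·ρ·δ_j·(u_j(1, x_{−j}) − u_j(−1, x_{−j})); consequently u_j(1, x_{−j}) − u_j(−1, x_{−j}) > 0 if and only if Φ(1, x_{−j}) − Φ(−1, x_{−j}) > 0, i.e., Φ is an ordinal potential function for G. -/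

import Mathlib

open Finset

/-!
Changing `x_j` from `-1` to `1` shifts the linear form `S(x) = ∑ δ_i x_i` by `2δ_j` around
`A = ∑_{i≠j} δ_i x_i`, so the square term of `Φ` changes by `(A + δ_j)² - (A - δ_j)² = 4δ_jA`
and the linear term by `-4 b_j δ_j`. Since every `w_{kj} = δ_k`, player `j`'s payoff difference
is `2(A - b_j)`. The potential difference is thus the payoff difference times `2ρδ_j > 0`.
-/

variable {ι : Type*} [Fintype ι] [DecidableEq ι]

theorem sum_mul_update_eq (a x : ι → ℝ) (j : ι) (c : ℝ) :
    ∑ i, a i * Function.update x j c i = a j * c + ∑ i ∈ univ.filter (· ≠ j), a i * x i := by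
  rw [filter_ne' univ j, ← add_sum_erase _ _ (mem_univ j), Function.update_self]
  congr 1
  exact sum_congr rfl fun i hi => by rw [Function.update_of_ne (ne_of_mem_erase hi)]

theorem quadratic_potential_update_sub (δ b x : ι → ℝ) (ρ : ℝ) (j : ι) :
    let Φ : (ι → ℝ) → ℝ := fun y => ρ * ((∑ i, δ i * y i) ^ 2 - 2 * ∑ i, b i * δ i * y i)
    Φ (Function.update x j 1) - Φ (Function.update x j (-1))
      = 4 * ρ * δ j * ((∑ i ∈ univ.filter (· ≠ j), δ i * x i) - b j) := by
  intro Φ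
  simp only [Φ, sum_mul_update_eq δ, sum_mul_update_eq (fun i => b i * δ i)]
  ring

theorem linear_payoff_update_sub (w : ι → ι → ℝ) (δ b x : ι → ℝ) (j : ι)
    (hw : ∀ k, k ≠ j → w k j = δ k) :
    let u : (ι → ℝ) → ℝ := fun y => y j * ((∑ k ∈ univ.filter (· ≠ j), w k j * y k) - b j)
    u (Function.update x j 1) - u (Function.update x j (-1))
      = 2 * ((∑ i ∈ univ.filter (· ≠ j), δ i * x i) - b j) := by
  intro u
  have hsum (c : ℝ) : ∑ k ∈ univ.filter (· ≠ j), w k j * Function.update x j c k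
      = ∑ i ∈ univ.filter (· ≠ j), δ i * x i :=
    sum_congr rfl fun k hk => by
      have hkj : k ≠ j := (mem_filter.mp hk).2
      rw [Function.update_of_ne hkj, hw k hkj]
  simp only [u, hsum, Function.update_self]
  ring

theorem indiscriminate_lig_ordinal_potential (n : ℕ)
    (w : Fin n → Fin n → ℝ) (δ : Fin n → ℝ) (b : Fin n → ℝ) (ρ : ℝ)
    (hδ : ∀ i, ρ * δ i > 0)
    (hw : ∀ i j : Fin n, j ≠ i → w i j = δ i)
    (j : Fin n) (x : Fin n → ℝ) :
    let Φ : (Fin n → ℝ) → ℝ := fun y =>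
      ρ * ((∑ i, δ i * y i) ^ 2 - 2 * ∑ i, b i * δ i * y i)
    let u : Fin n → (Fin n → ℝ) → ℝ := fun i y =>
      y i * ((∑ k ∈ univ.filter (· ≠ i), w k i * y k) - b i)
    Φ (Function.update x j 1) - Φ (Function.update x j (-1))
        = 4 * ρ * δ j * ((∑ i ∈ univ.filter (· ≠ j), δ i * x i) - b j) ∧
    Φ (Function.update x j 1) - Φ (Function.update x j (-1))
        = 2 * ρ * δ j *
            (u j (Function.update x j 1) - u j (Function.update x j (-1))) ∧
    (0 < u j (Function.update x j 1) - u j (Function.update x j (-1))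
        ↔ 0 < Φ (Function.update x j 1) - Φ (Function.update x j (-1))) := by
  intro Φ u
  have hΦ : Φ (Function.update x j 1) - Φ (Function.update x j (-1))
      = 4 * ρ * δ j * ((∑ i ∈ univ.filter (· ≠ j), δ i * x i) - b j) :=
    quadratic_potential_update_sub δ b x ρ j
  have hu : u j (Function.update x j 1) - u j (Function.update x j (-1))
      = 2 * ((∑ i ∈ univ.filter (· ≠ j), δ i * x i) - b j) :=
    linear_payoff_update_sub w δ b x j fun k hk => hw k j hk.symm
  have hΦu : Φ (Function.update x j 1) - Φ (Function.update x j (-1))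
      = 2 * ρ * δ j * (u j (Function.update x j 1) - u j (Function.update x j (-1))) := by
    rw [hΦ, hu]; ring
  refine ⟨hΦ, hΦu, ?_⟩
  rw [hΦu]
  exact (mul_pos_iff_of_pos_left (by linarith [hδ j])).symm
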